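/- arXiv:1805.11952 — 5 statements merged into one kernel-verified Lean document; each statement's English description precedes it below -/
import Mathlib

section
/- Let μ : Fin N → ℕ be a natural multiset of m-cardinality r = Σ_i μ(i) ≥ 1 and let A be its normalized hypermatrix representation. Then for every index j : Fin N, the sum of the entries of A over all tuples whose first coordinate is j equals the multiplicity of j, i.e. Σ_{t : t(0) = j} A(t) = μ(j). -/
/-!
The tuples of length `r` realizing `μ` number `r! / ∏ i, μ i!` (the multinomial coefficient).
This follows by induction on `r`, splitting by the first coordinate: prepending `j` is a bijection
from the tuples realizing `μ` with one copy of `j` removed onto the realizing tuples with first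
coordinate `j`, so there are `μ j * (r - 1)! / ∏ i, μ i!` of the latter. Each of them contributes
`∏ i, μ i! / (r - 1)!` to the sum.
-/

open Finset
open scoped Nat

section Realizing

variable {α : Type*} [Fintype α] [DecidableEq α]

def realizingTuples (n : ℕ) (μ : α → ℕ) : Finset (Fin n → α) :=
  {t | ∀ i, #{s | t s = i} = μ i}

omit [Fintype α] in
lemma card_filter_cons_eq {n : ℕ} (j : α) (t : Fin n → α) (i : α) :
    #{s | (Fin.cons j t : Fin (n + 1) → α) s = i} = #{s | t s = i} + if j = i then 1 else 0 := by
  simp only [card_filter, Fin.sum_univ_succ, Fin.cons_zero, Fin.cons_succ]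
  ring

lemma cons_mem_realizingTuples_iff {n : ℕ} {μ : α → ℕ} {j : α} (hj : μ j ≠ 0)
    (t : Fin n → α) :
    Fin.cons j t ∈ realizingTuples (n + 1) μ ↔
      t ∈ realizingTuples n (Function.update μ j (μ j - 1)) := by
  simp only [realizingTuples, mem_filter, mem_univ, true_and, card_filter_cons_eq]
  refine forall_congr' fun i => ?_
  rcases eq_or_ne j i with rfl | hji
  · simp only [if_pos, Function.update_self]
    omega
  · simp [hji, Function.update_of_ne hji.symm]

lemma filter_realizingTuples_head_eq_image {n : ℕ} {μ : α → ℕ} {j : α} (hj : μ j ≠ 0) :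
    {t ∈ realizingTuples (n + 1) μ | t 0 = j} =
      (realizingTuples n (Function.update μ j (μ j - 1))).image (Fin.cons j) := by
  ext t
  rw [mem_filter, mem_image]
  constructor
  · rintro ⟨ht, rfl⟩
    rw [← Fin.cons_self_tail t, cons_mem_realizingTuples_iff hj] at ht
    exact ⟨Fin.tail t, ht, Fin.cons_self_tail t⟩
  · rintro ⟨t', ht', rfl⟩
    exact ⟨(cons_mem_realizingTuples_iff hj t').2 ht', Fin.cons_zero _ _⟩

lemma filter_realizingTuples_head_eq_empty {n : ℕ} {μ : α → ℕ} {j : α} (hj : μ j = 0) :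
    {t ∈ realizingTuples (n + 1) μ | t 0 = j} = ∅ := by
  refine filter_false_of_mem fun t ht h0 => ?_
  have hpos : 0 < #{s | t s = j} := card_pos.2 ⟨0, by simp [h0]⟩
  simp only [realizingTuples, mem_filter, mem_univ, true_and] at ht
  rw [ht j, hj] at hpos
  exact hpos.false

lemma prod_factorial_eq_mul_prod_factorial_update {μ : α → ℕ} {j : α} (hj : μ j ≠ 0) :
    ∏ i, (μ i)! = μ j * ∏ i, (Function.update μ j (μ j - 1) i)! := by
  have hupdate (k : ℕ) : ∏ i, (Function.update μ j k i)! = k ! * ∏ i ∈ univ \ {j}, (μ i)! := by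
    rw [← prod_update_of_mem (mem_univ j)]
    refine prod_congr rfl fun i _ => ?_
    rcases eq_or_ne i j with rfl | hij <;> simp [*]
  conv_lhs => rw [← Function.update_eq_self j μ, hupdate, ← Nat.mul_factorial_pred hj]
  rw [hupdate, mul_assoc]

lemma sum_update_pred {μ : α → ℕ} {j : α} (hj : μ j ≠ 0) :
    ∑ i, Function.update μ j (μ j - 1) i = ∑ i, μ i - 1 := by
  rw [sum_update_of_mem (mem_univ j), ← add_sum_erase _ _ (mem_univ j), sdiff_singleton_eq_erase]
  omega

lemma card_filter_realizingTuples_head_mul_prod_factorial_eq_update (n : ℕ) (μ : α → ℕ) (j : α) :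
    #{t ∈ realizingTuples (n + 1) μ | t 0 = j} * ∏ i, (μ i)! =
      μ j * (#(realizingTuples n (Function.update μ j (μ j - 1))) *
        ∏ i, (Function.update μ j (μ j - 1) i)!) := by
  rcases eq_or_ne (μ j) 0 with hj | hj
  · simp [filter_realizingTuples_head_eq_empty hj, hj]
  · rw [filter_realizingTuples_head_eq_image hj, card_image_of_injective _ (Fin.cons_right_injective _),
      prod_factorial_eq_mul_prod_factorial_update hj]
    ring

theorem card_realizingTuples_mul_prod_factorial {n : ℕ} {μ : α → ℕ} (hμ : ∑ i, μ i = n) :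
    #(realizingTuples n μ) * ∏ i, (μ i)! = n ! := by
  induction n generalizing μ with
  | zero =>
    have hμ0 : ∀ i, μ i = 0 := fun i => sum_eq_zero_iff.1 hμ i (mem_univ i)
    have huniv : realizingTuples 0 μ = univ := eq_univ_of_forall fun t => by
      simp [realizingTuples, hμ0, Subsingleton.elim t default]
    simp [huniv, hμ0]
  | succ n ih =>
    have hfiber (j : α) :
        #{t ∈ realizingTuples (n + 1) μ | t 0 = j} * ∏ i, (μ i)! = μ j * n ! := by
      rw [card_filter_realizingTuples_head_mul_prod_factorial_eq_update]
      rcases eq_or_ne (μ j) 0 with hj | hj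
      · simp [hj]
      · rw [ih (by rw [sum_update_pred hj, hμ, Nat.add_sub_cancel])]
    rw [card_eq_sum_card_fiberwise (f := fun t => t 0) (fun _ _ => mem_univ _), sum_mul,
      sum_congr rfl fun j _ => hfiber j, ← sum_mul, hμ, Nat.factorial_succ]

lemma card_filter_realizingTuples_head_mul_prod_factorial {n : ℕ} {μ : α → ℕ}
    (hμ : ∑ i, μ i = n + 1) (j : α) :
    #{t ∈ realizingTuples (n + 1) μ | t 0 = j} * ∏ i, (μ i)! = μ j * n ! := by
  rw [card_filter_realizingTuples_head_mul_prod_factorial_eq_update]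
  rcases eq_or_ne (μ j) 0 with hj | hj
  · simp [hj]
  · rw [card_realizingTuples_mul_prod_factorial (by rw [sum_update_pred hj, hμ, Nat.add_sub_cancel])]

end Realizing

/-- For the normalized hypermatrix representation `A` of a natural multiset
`μ : Fin N → ℕ` of m-cardinality `r = Σ_i μ(i) ≥ 1`, for every index `j : Fin N`
the sum of the entries of `A` over all tuples whose first coordinate is `j`
equals the multiplicity `μ j`. -/
theorem stmt5 (N r : ℕ) (hr : 1 ≤ r) (μ : Fin N → ℕ) (hμ : ∑ i, μ i = r) (j : Fin N) :
    ∑ t ∈ Finset.univ.filter (fun t : Fin r → Fin N => t ⟨0, hr⟩ = j),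
        (if ∀ i, (Finset.univ.filter (fun s => t s = i)).card = μ i
         then ((∏ i, (μ i).factorial : ℕ) : ℝ) / (r - 1).factorial
         else 0) = μ j := by
  obtain ⟨n, rfl⟩ : ∃ n, r = n + 1 := ⟨r - 1, by omega⟩
  rw [show (⟨0, hr⟩ : Fin (n + 1)) = 0 from rfl, ← sum_filter, sum_const, nsmul_eq_mul,
    Nat.add_sub_cancel, mul_div_assoc', div_eq_iff (by positivity), filter_comm]
  norm_cast
  convert card_filter_realizingTuples_head_mul_prod_factorial hμ j using 4
  -- the two sides differ only in the `Decidable` instance of `∀ i, …`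
  unfold realizingTuples
  congr
end

section
/- Let H be an r-m-uniform hb-graph on Fin n (every hb-edge has m-cardinality r ≥ 1) with hb-edges e_1, …, e_p, and let A_H be its k̄-adjacency hypermatrix. Then the sum of all entries of A_H equals r times the number of hb-edges: Σ_{t : Fin r → Fin n} A_H(t) = r · p. -/
/-!
The permutations of `Fin r` act on tuples `t : Fin r → Fin n` by precomposition, and the tuples
realizing a hb-edge `e` form a single orbit whose stabilizer is `∏ i, Perm (t⁻¹ {i})`, of order
`∏ i, e(i)!`. By orbit–stabilizer exactly `r! / ∏ i, e(i)!` tuples realize `e`, so each hb-edge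
contributes `r! / (r - 1)! = r` to the sum of the entries.
-/

open Finset Nat

section FiberCounting

variable {α ι : Type*} [Fintype α] [DecidableEq ι]

lemma card_filter_comp_perm (f : α → ι) (σ : Equiv.Perm α) (i : ι) :
    #{a | f (σ a) = i} = #{a | f a = i} := by
  simp only [← Fintype.card_subtype]
  exact Fintype.card_congr (σ.subtypeEquiv fun _ => Iff.rfl)

lemma mem_orbit_domMulAct_iff (f t : α → ι) :
    t ∈ MulAction.orbit (Equiv.Perm α)ᵈᵐᵃ f ↔ ∀ i, #{a | t a = i} = #{a | f a = i} := by
  constructor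
  · rintro ⟨g, rfl⟩ i
    exact card_filter_comp_perm f _ i
  · intro h
    have e : ∀ i, {a // t a = i} ≃ {a // f a = i} := fun i =>
      Fintype.equivOfCardEq (by simp only [Fintype.card_subtype, h])
    exact ⟨DomMulAct.mk (Equiv.ofFiberEquiv e), funext (Equiv.ofFiberEquiv_map e)⟩

variable [Fintype ι]

lemma exists_fun_card_filter_eq (e : ι → ℕ) (he : ∑ i, e i = Fintype.card α) :
    ∃ f : α → ι, ∀ i, #{a | f a = i} = e i := by
  let σ : α ≃ Σ i, Fin (e i) := Fintype.equivOfCardEq (by simp [he])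
  refine ⟨fun a => (σ a).1, fun i => ?_⟩
  rw [← Fintype.card_subtype, ← Fintype.card_fin (e i)]
  exact Fintype.card_congr ((σ.subtypeEquiv fun _ => Iff.rfl).trans (Equiv.sigmaSubtype i))

variable [DecidableEq α]

theorem card_filter_fiberCards_eq_mul_prod_factorial (f : α → ι) :
    #{t : α → ι | ∀ i, #{a | t a = i} = #{a | f a = i}} * ∏ i, (#{a | f a = i})! =
      (Fintype.card α)! := by
  have hstab : Nat.card (MulAction.stabilizer (Equiv.Perm α)ᵈᵐᵃ f) = ∏ i, (#{a | f a = i})! := by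
    rw [Nat.card_congr (MulOpposite.opEquiv.trans (DomMulAct.stabilizerMulEquiv f).toEquiv),
      Nat.card_pi]
    simp only [Nat.card_eq_fintype_card, Fintype.card_perm, Fintype.card_subtype]
  have horbit : MulAction.orbit (Equiv.Perm α)ᵈᵐᵃ f =
      ↑({t : α → ι | ∀ i, #{a | t a = i} = #{a | f a = i}} : Finset (α → ι)) := by
    ext t; simp [mem_orbit_domMulAct_iff]
  rw [← Set.ncard_coe_finset, ← horbit, ← MulAction.index_stabilizer, ← hstab, mul_comm,
    Subgroup.card_mul_index, ← Nat.card_congr DomMulAct.mk, Nat.card_perm, Nat.card_eq_fintype_card]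

end FiberCounting

/-- For an `r`-m-uniform hb-graph on `Fin n` with hb-edges `e 1, …, e p`
(each of m-cardinality `r ≥ 1`) and its k̄-adjacency hypermatrix
`A_H(t) = Σ_k (∏_i e_k(i)!)/(r−1)! · [t realizes e_k]`, the sum of all entries of
`A_H` equals `r · p`, i.e. `r` times the number of hb-edges. -/
theorem stmt7 (n p r : ℕ) (hr : 1 ≤ r) (e : Fin p → Fin n → ℕ)
    (hunif : ∀ k, ∑ j, e k j = r) :
    ∑ t : Fin r → Fin n,
        (∑ k, if ∀ i, (Finset.univ.filter (fun s => t s = i)).card = e k i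
              then ((∏ i, (e k i).factorial : ℕ) : ℝ) / (r - 1).factorial
              else 0)
      = (r : ℝ) * p := by
  classical
  have hr_fact : (r : ℝ) * (r - 1)! = r ! := by exact_mod_cast Nat.mul_factorial_pred (by omega)
  have per_edge : ∀ k, ∑ t : Fin r → Fin n,
      (if ∀ i, #{s | t s = i} = e k i then ((∏ i, (e k i)! : ℕ) : ℝ) / (r - 1)! else 0) = r := by
    intro k
    obtain ⟨f, hf⟩ := exists_fun_card_filter_eq (α := Fin r) (e k) (by simp [hunif])
    have hcount := card_filter_fiberCards_eq_mul_prod_factorial f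
    simp only [hf, Fintype.card_fin] at hcount
    rw [← Finset.sum_filter, sum_const, nsmul_eq_mul, mul_div_assoc', div_eq_iff (by positivity),
      hr_fact]
    exact_mod_cast hcount
  rw [Finset.sum_comm, Fintype.sum_congr _ _ per_edge]
  simp [mul_comm]
end

section
/- Let H be a hb-graph on Fin n with hb-edges e_1, …, e_p of m-cardinalities ρ_k satisfying 1 ≤ ρ_k ≤ r, where r ≥ 2 is the m-range of H, and let A_sil be the e-adjacency hypermatrix of its silo-uniformized hb-graph. Then for every s with 1 ≤ s ≤ r−1, the sum of the entries of A_sil over all tuples whose first coordinate is the null vertex N_s equals (r − s) · |{k : ρ_k = s}|; hence the number of hb-edges of each m-cardinality s < r can be retrieved from A_sil as |{k : ρ_k = s}| = (Σ_{t : t(0) = N_s} A_sil(t))/(r − s). -/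
/-- The hb-edges of the silo-uniformized hb-graph: the original multiplicities on
the original vertices `Sum.inl i`, and multiplicity `r − ρ_k` on the null vertex
`N_s = Sum.inr s` (where `N_s` is labelled `(s : ℕ) + 1 ∈ {1, …, r−1}`) exactly
when the label equals the m-cardinality `ρ_k = Σ_j e_k(j)` of the hb-edge. -/
def siloEdge (n p r : ℕ) (e : Fin p → Fin n → ℕ) (k : Fin p) :
    Fin n ⊕ Fin (r - 1) → ℕ
  | Sum.inl i => e k i
  | Sum.inr s => if (s : ℕ) + 1 = ∑ j, e k j then r - ∑ j, e k j else 0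

/-- The e-adjacency hypermatrix of the silo-uniformized hb-graph:
`A_sil(t) = Σ_k (∏_v ê_k(v)!)/(r−1)! · [t realizes ê_k]`. -/
noncomputable def Asil (n p r : ℕ) (e : Fin p → Fin n → ℕ)
    (t : Fin r → Fin n ⊕ Fin (r - 1)) : ℝ :=
  ∑ k, if ∀ v, (Finset.univ.filter (fun s => t s = v)).card = siloEdge n p r e k v
       then ((∏ v, (siloEdge n p r e k v).factorial : ℕ) : ℝ) / (r - 1).factorial
       else 0

/-! If `c : V → ℕ` sums to `r`, the tuples of length `r` realizing `c` number `r! / ∏ v, (c v)!`,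
and `c a * (r - 1)! / ∏ v, (c v)!` of them start with `a`: dropping the first coordinate
identifies the latter with the realizations of `c` with one occurrence of `a` removed, which
also drives the induction on `r`. So the hb-edge `ê_k` contributes exactly `ê_k(N_s)` to the sum
of `A_sil` over the tuples starting with `N_s`, namely `r - s` if `ρ_k = s` and `0` otherwise. -/

open Finset Function Nat

section Realizations

variable {V : Type*} [DecidableEq V]

def realizations [Fintype V] (m : ℕ) (c : V → ℕ) : Finset (Fin m → V) :=
  {t | ∀ v, #{i | t i = v} = c v}

lemma apply_ne_of_mem_realizations [Fintype V] {m : ℕ} {c : V → ℕ} {t : Fin m → V}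
    (ht : t ∈ realizations m c) {a : V} (ha : c a = 0) (i : Fin m) : t i ≠ a := by
  intro hi
  have hpos : 0 < #{j | t j = a} := card_pos.mpr ⟨i, by simp [hi]⟩
  rw [(mem_filter.mp ht).2 a, ha] at hpos
  exact hpos.false

lemma card_filter_cons_eq_s9 {m : ℕ} (a : V) (u : Fin m → V) (v : V) :
    #{i | (Fin.cons a u : Fin (m + 1) → V) i = v} = (if a = v then 1 else 0) + #{i | u i = v} := by
  rw [card_filter, card_filter, Fin.sum_univ_succ]
  simp

lemma cons_mem_realizations_iff [Fintype V] {m : ℕ} {c : V → ℕ} {a : V} (ha : 0 < c a)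
    (u : Fin m → V) :
    (Fin.cons a u : Fin (m + 1) → V) ∈ realizations (m + 1) c ↔
      u ∈ realizations m (update c a (c a - 1)) := by
  simp only [realizations, mem_filter, mem_univ, true_and, card_filter_cons_eq_s9]
  refine forall_congr' fun v => ?_
  by_cases hv : v = a
  · subst hv; simp only [if_true, update_self]; omega
  · simp only [if_neg (Ne.symm hv), update_of_ne hv]; omega

lemma card_filter_realizations_head_of_pos [Fintype V] {m : ℕ} {c : V → ℕ} {a : V}
    (ha : 0 < c a) :
    #{t ∈ realizations (m + 1) c | t 0 = a} = #(realizations m (update c a (c a - 1))) := by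
  refine card_nbij' Fin.tail (fun u => (Fin.cons a u : Fin (m + 1) → V)) ?_ ?_ ?_ ?_
  · intro t ht
    obtain ⟨hct, rfl⟩ := mem_filter.mp ht
    rwa [← Fin.cons_self_tail t, cons_mem_realizations_iff ha] at hct
  · intro u hu
    exact mem_filter.mpr ⟨(cons_mem_realizations_iff ha u).mpr hu, rfl⟩
  · intro t ht
    rw [← (mem_filter.mp ht).2]
    exact Fin.cons_self_tail t
  · intro u _
    exact Fin.tail_cons (α := fun _ => V) a u

lemma prod_factorial_eq_mul_prod_factorial_update_s9 [Fintype V] (c : V → ℕ) {a : V}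
    (ha : 0 < c a) :
    ∏ v, (c v)! = c a * ∏ v, (update c a (c a - 1) v)! := by
  rw [← mul_prod_erase univ _ (mem_univ a), ← mul_prod_erase univ _ (mem_univ a), update_self,
    ← mul_assoc, mul_factorial_pred ha.ne']
  congr 1
  exact prod_congr rfl fun v hv => by rw [update_of_ne (ne_of_mem_erase hv)]

lemma sum_update_pred_s9 [Fintype V] (c : V → ℕ) {a : V} (ha : 0 < c a) :
    ∑ v, update c a (c a - 1) v = ∑ v, c v - 1 := by
  rw [← add_sum_erase univ _ (mem_univ a), ← add_sum_erase univ _ (mem_univ a), update_self,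
    sum_congr rfl fun v hv => update_of_ne (ne_of_mem_erase hv) _ _]
  omega

lemma prod_factorial_mul_card_filter_realizations_succ_head [Fintype V] (m : ℕ) (c : V → ℕ)
    (a : V) :
    (∏ v, (c v)!) * #{t ∈ realizations (m + 1) c | t 0 = a} =
      c a * ((∏ v, (update c a (c a - 1) v)!) * #(realizations m (update c a (c a - 1)))) := by
  rcases (c a).eq_zero_or_pos with ha | ha
  · rw [ha, zero_mul, filter_false_of_mem fun t ht => apply_ne_of_mem_realizations ht ha 0,
      card_empty, mul_zero]
  · rw [card_filter_realizations_head_of_pos ha, prod_factorial_eq_mul_prod_factorial_update_s9 c ha,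
      mul_assoc]

theorem prod_factorial_mul_card_realizations [Fintype V] {m : ℕ} {c : V → ℕ}
    (h : ∑ v, c v = m) : (∏ v, (c v)!) * #(realizations m c) = m ! := by
  induction m generalizing c with
  | zero =>
    have hc : ∀ v, c v = 0 := fun v => (sum_eq_zero_iff.mp h) v (mem_univ v)
    simp [realizations, hc]
  | succ m ih =>
    have head (a : V) :
        (∏ v, (c v)!) * #{t ∈ realizations (m + 1) c | t 0 = a} = c a * m ! := by
      rw [prod_factorial_mul_card_filter_realizations_succ_head]
      rcases (c a).eq_zero_or_pos with ha | ha
      · rw [ha, zero_mul, zero_mul]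
      · rw [ih (by rw [sum_update_pred_s9 c ha, h]; rfl)]
    rw [card_eq_sum_card_fiberwise (f := fun t => t 0) (t := univ) fun _ _ => mem_univ _,
      mul_sum, sum_congr rfl fun a _ => head a, ← sum_mul, h, factorial_succ]

theorem prod_factorial_mul_card_filter_realizations_head [Fintype V] {r : ℕ} (hr : 0 < r)
    {c : V → ℕ} (h : ∑ v, c v = r) (a : V) :
    (∏ v, (c v)!) * #{t ∈ realizations r c | t ⟨0, hr⟩ = a} = c a * (r - 1)! := by
  obtain ⟨m, rfl⟩ : ∃ m, r = m + 1 := ⟨r - 1, by omega⟩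
  rw [Fin.zero_eta, prod_factorial_mul_card_filter_realizations_succ_head, Nat.add_sub_cancel]
  rcases (c a).eq_zero_or_pos with ha | ha
  · rw [ha, zero_mul, zero_mul]
  · rw [prod_factorial_mul_card_realizations (by rw [sum_update_pred_s9 c ha, h]; rfl)]

end Realizations

section Silo

variable {n p r : ℕ} (e : Fin p → Fin n → ℕ)

lemma siloEdge_inr (k : Fin p) (s : Fin (r - 1)) :
    siloEdge n p r e k (Sum.inr s) = if ∑ j, e k j = s + 1 then r - (s + 1) else 0 := by
  by_cases hk : ∑ j, e k j = s + 1
  · simp [siloEdge, hk]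
  · simp [siloEdge, hk, Ne.symm hk]

lemma sum_siloEdge_of_eq {k : Fin p} {s : Fin (r - 1)} (hk : ∑ j, e k j = s + 1) :
    ∑ v, siloEdge n p r e k v = r := by
  have hnull : ∑ s' : Fin (r - 1), siloEdge n p r e k (Sum.inr s') = r - (s + 1) := by
    rw [sum_eq_single s (fun s' _ hs' => ?_) (by simp), siloEdge_inr, if_pos hk]
    rw [siloEdge_inr, if_neg (fun h => hs' (Fin.ext (by omega)))]
  rw [Fintype.sum_sum_type, hnull]
  change ∑ j, e k j + _ = r
  omega

lemma prod_factorial_mul_card_filter_realizations_siloEdge (hr : 0 < r) (k : Fin p)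
    (s : Fin (r - 1)) :
    (∏ v, (siloEdge n p r e k v)!) *
        #{t ∈ realizations r (siloEdge n p r e k) | t ⟨0, hr⟩ = Sum.inr s} =
      siloEdge n p r e k (Sum.inr s) * (r - 1)! := by
  by_cases hk : ∑ j, e k j = s + 1
  · exact prod_factorial_mul_card_filter_realizations_head hr (sum_siloEdge_of_eq e hk) _
  · have hzero : siloEdge n p r e k (Sum.inr s) = 0 := by rw [siloEdge_inr, if_neg hk]
    rw [hzero, filter_false_of_mem fun t ht => apply_ne_of_mem_realizations ht hzero _,
      card_empty, mul_zero, zero_mul]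

lemma sum_filter_head_Asil (hr : 0 < r) (s : Fin (r - 1)) :
    ∑ t ∈ {t : Fin r → Fin n ⊕ Fin (r - 1) | t ⟨0, hr⟩ = Sum.inr s}, Asil n p r e t =
      ∑ k, (siloEdge n p r e k (Sum.inr s) : ℝ) := by
  unfold Asil
  rw [sum_comm]
  refine sum_congr rfl fun k _ => ?_
  have hcount := prod_factorial_mul_card_filter_realizations_siloEdge e hr k s
  rw [← sum_filter, filter_comm, sum_const, nsmul_eq_mul, mul_div_assoc',
    div_eq_iff (by positivity)]
  exact_mod_cast (mul_comm _ _).trans hcount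

lemma sum_siloEdge_inr (s : Fin (r - 1)) :
    ∑ k, siloEdge n p r e k (Sum.inr s) = (r - (s + 1)) * #{k | ∑ j, e k j = s + 1} := by
  simp only [siloEdge_inr, ← sum_filter, sum_const, smul_eq_mul, mul_comm]

end Silo

/-- For a hb-graph on `Fin n` with hb-edges of m-cardinalities `ρ_k` satisfying
`1 ≤ ρ_k ≤ r`, where `r ≥ 2` is the m-range: for every null vertex `N_s`
(labelled `s = (s' : ℕ) + 1` with `1 ≤ s ≤ r−1`), the sum of the entries of the
silo e-adjacency hypermatrix over all tuples whose first coordinate is `N_s`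
equals `(r − s) · |{k : ρ_k = s}|`; hence `|{k : ρ_k = s}|` is retrieved by
dividing this sum by `r − s`. -/
theorem stmt9 (n p r : ℕ) (hr : 2 ≤ r) (e : Fin p → Fin n → ℕ) :
    ∀ s : Fin (r - 1),
      (∑ t ∈ Finset.univ.filter
          (fun t : Fin r → Fin n ⊕ Fin (r - 1) => t ⟨0, by omega⟩ = Sum.inr s),
        Asil n p r e t)
        = (((r - ((s : ℕ) + 1)) *
            (Finset.univ.filter (fun k : Fin p => ∑ j, e k j = (s : ℕ) + 1)).card : ℕ) : ℝ) ∧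
      ((Finset.univ.filter (fun k : Fin p => ∑ j, e k j = (s : ℕ) + 1)).card : ℝ)
        = (∑ t ∈ Finset.univ.filter
              (fun t : Fin r → Fin n ⊕ Fin (r - 1) => t ⟨0, by omega⟩ = Sum.inr s),
            Asil n p r e t) / ((r - ((s : ℕ) + 1) : ℕ) : ℝ) := by
  intro s
  have hsum : ∑ t ∈ {t : Fin r → Fin n ⊕ Fin (r - 1) | t ⟨0, by omega⟩ = Sum.inr s},
      Asil n p r e t = ((r - (s + 1)) * #{k | ∑ j, e k j = s + 1} : ℕ) := by
    rw [sum_filter_head_Asil, ← Nat.cast_sum, sum_siloEdge_inr]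
  have hgap : ((r - (s + 1) : ℕ) : ℝ) ≠ 0 := Nat.cast_ne_zero.mpr (by omega)
  refine ⟨hsum, ?_⟩
  rw [hsum, Nat.cast_mul, mul_div_cancel_left₀ _ hgap]
end

section
/- Let a be an order-m (m ≥ 2) dimension-N hypermatrix with nonnegative real entries, and let λ be a real eigenvalue of a with real eigenvector x ≠ 0. Then |λ| ≤ max over i : Fin N of Σ_{t : t(0) = i} a(t), i.e. the modulus of any eigenvalue is bounded by the maximal row sum of the hypermatrix. -/
/-- For an order-`m` (`m ≥ 2`) dimension-`N` hypermatrix `a` with nonnegative real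
entries, any real eigenvalue `λ` (with real eigenvector `x ≠ 0`, i.e.
`Σ_{t : t(0) = i} a(t) · ∏_{s ≠ 0} x(t(s)) = λ · x(i)^{m−1}` for all `i`) satisfies
`|λ| ≤ max_i Σ_{t : t(0) = i} a(t)`, the maximal row sum of the hypermatrix. -/
theorem stmt13 (N m : ℕ) (hm : 2 ≤ m) (hN : 0 < N)
    (a : (Fin m → Fin N) → ℝ) (ha : ∀ t, 0 ≤ a t)
    (lam : ℝ) (x : Fin N → ℝ) (hx : x ≠ 0)
    (heig : ∀ i : Fin N,
      ∑ t ∈ Finset.univ.filter (fun t : Fin m → Fin N => t ⟨0, by omega⟩ = i),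
          a t * ∏ s ∈ Finset.univ.erase ⟨0, by omega⟩, x (t s)
        = lam * x i ^ (m - 1)) :
    |lam| ≤ Finset.univ.sup' (Finset.univ_nonempty_iff.mpr ⟨⟨0, hN⟩⟩)
        (fun i : Fin N =>
          ∑ t ∈ Finset.univ.filter (fun t : Fin m → Fin N => t ⟨0, by omega⟩ = i),
            a t) := by
  obtain ⟨i, -, hi⟩ := Finset.exists_max_image (Finset.univ : Finset (Fin N))
    (fun j => |x j|) (Finset.univ_nonempty_iff.mpr ⟨⟨0, hN⟩⟩)
  have hxi : 0 < |x i| := by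
    rcases Function.ne_iff.mp hx with ⟨j, hj⟩
    have h1 := hi j (Finset.mem_univ j)
    have h2 : 0 < |x j| := abs_pos.mpr hj
    linarith
  have hpow : 0 < |x i| ^ (m - 1) := pow_pos hxi _
  have hcard : ((Finset.univ : Finset (Fin m)).erase ⟨0, by omega⟩).card = m - 1 := by
    simp
  have key : |lam| * |x i| ^ (m - 1) ≤
      (∑ t ∈ Finset.univ.filter (fun t : Fin m → Fin N => t ⟨0, by omega⟩ = i), a t)
        * |x i| ^ (m - 1) := by
    calc |lam| * |x i| ^ (m - 1) = |lam * x i ^ (m - 1)| := by rw [abs_mul, abs_pow]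
      _ = |∑ t ∈ Finset.univ.filter (fun t : Fin m → Fin N => t ⟨0, by omega⟩ = i),
            a t * ∏ s ∈ Finset.univ.erase ⟨0, by omega⟩, x (t s)| := by rw [heig i]
      _ ≤ ∑ t ∈ Finset.univ.filter (fun t : Fin m → Fin N => t ⟨0, by omega⟩ = i),
            |a t * ∏ s ∈ Finset.univ.erase ⟨0, by omega⟩, x (t s)| :=
          Finset.abs_sum_le_sum_abs _ _
      _ ≤ ∑ t ∈ Finset.univ.filter (fun t : Fin m → Fin N => t ⟨0, by omega⟩ = i),
            a t * |x i| ^ (m - 1) := by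
          apply Finset.sum_le_sum
          intro t ht
          rw [abs_mul, abs_of_nonneg (ha t), Finset.abs_prod]
          apply mul_le_mul_of_nonneg_left _ (ha t)
          calc ∏ s ∈ (Finset.univ : Finset (Fin m)).erase ⟨0, by omega⟩, |x (t s)|
              ≤ ∏ s ∈ (Finset.univ : Finset (Fin m)).erase ⟨0, by omega⟩, |x i| :=
                Finset.prod_le_prod (fun _ _ => abs_nonneg _)
                  (fun s _ => hi (t s) (Finset.mem_univ _))
            _ = |x i| ^ (m - 1) := by rw [Finset.prod_const, hcard]
      _ = (∑ t ∈ Finset.univ.filter (fun t : Fin m → Fin N => t ⟨0, by omega⟩ = i), a t)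
            * |x i| ^ (m - 1) := by rw [Finset.sum_mul]
  have hlam : |lam| ≤
      ∑ t ∈ Finset.univ.filter (fun t : Fin m → Fin N => t ⟨0, by omega⟩ = i), a t :=
    le_of_mul_le_mul_right key hpow
  exact hlam.trans (Finset.le_sup'
    (fun i : Fin N =>
      ∑ t ∈ Finset.univ.filter (fun t : Fin m → Fin N => t ⟨0, by omega⟩ = i), a t)
    (Finset.mem_univ i))
end

section
/- Let H be a hb-graph on Fin n with hb-edges e_1, …, e_p of m-cardinalities ρ_k satisfying 1 ≤ ρ_k ≤ r, where r ≥ 2 is the m-range of H, and let A_sil be the e-adjacency hypermatrix of its silo-uniformized hb-graph. Then the total sum of all entries of A_sil equals r · p. -/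
section Stmt15Aux
open Finset

theorem count_card {r : ℕ} {V : Type*} [DecidableEq V] (t : Fin r → V) (v : V) :
    (Finset.univ.filter (fun s => t s = v)).card = (List.ofFn t).count v := by
  rw [← Multiset.coe_count, ← Fin.univ_val_map, Multiset.count_map]
  have : Multiset.filter (fun a => v = t a) Finset.univ.val
       = Multiset.filter (fun s => t s = v) Finset.univ.val :=
    Multiset.filter_congr (fun x _ => ⟨Eq.symm, Eq.symm⟩)
  rw [this]; rfl

theorem perm_exists {r : ℕ} {V : Type*} [LinearOrder V] {f g : Fin r → V}
    (h : (List.ofFn f).Perm (List.ofFn g)) : ∃ σ : Equiv.Perm (Fin r), f ∘ σ = g := by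
  have hs : f ∘ Tuple.sort f = g ∘ Tuple.sort g := by
    apply List.ofFn_injective
    refine (fun h1 h2 h3 => List.Perm.eq_of_sortedLE h2 h3 h1) ?_ ?_ ?_
    · exact ((Tuple.sort f).ofFn_comp_perm f).trans (h.trans ((Tuple.sort g).ofFn_comp_perm g).symm)
    · exact List.sortedLE_ofFn_iff.mpr (Tuple.monotone_sort f)
    · exact List.sortedLE_ofFn_iff.mpr (Tuple.monotone_sort g)
  exact ⟨Tuple.sort f * (Tuple.sort g)⁻¹, by
    ext s
    have := congrFun hs ((Tuple.sort g)⁻¹ s)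
    simpa using this⟩

theorem exists_list {V : Type*} [Fintype V] [DecidableEq V] (f : V → ℕ) :
    ∃ l : List V, l.length = ∑ v, f v ∧ ∀ v, l.count v = f v := by
  refine ⟨(∑ v, f v • ({v} : Multiset V)).toList, ?_, ?_⟩
  · rw [Multiset.length_toList]
    have : ∀ (s : Finset V), Multiset.card (∑ v ∈ s, f v • ({v} : Multiset V)) = ∑ v ∈ s, f v := by
      intro s
      induction s using Finset.cons_induction with
      | empty => simp
      | cons a s ha ih => simp [Finset.sum_cons, Multiset.card_nsmul, ih]
    exact this univ
  · intro v
    rw [← Multiset.coe_count, Multiset.coe_toList, Multiset.count_sum']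
    simp [Multiset.count_nsmul, Multiset.count_singleton]

theorem key {V : Type*} [Fintype V] [DecidableEq V] [LinearOrder V] {r : ℕ} (f : V → ℕ)
    (hf : ∑ v, f v = r) :
    (Finset.univ.filter
        (fun t : Fin r → V => ∀ v, (Finset.univ.filter (fun s => t s = v)).card = f v)).card
      * ∏ v, (f v).factorial = r.factorial := by
  obtain ⟨l, hlen, hcnt⟩ : ∃ l : List V, l.length = r ∧ ∀ v, l.count v = f v := by
    obtain ⟨l, h1, h2⟩ := exists_list f
    exact ⟨l, by rw [h1, hf], h2⟩
  subst hlen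
  set t₀ : Fin l.length → V := l.get with ht₀def
  have hofn : List.ofFn t₀ = l := List.ofFn_get l
  set S := Finset.univ.filter
      (fun t : Fin l.length → V => ∀ v, (Finset.univ.filter (fun s => t s = v)).card = f v) with hS
  have hmem : ∀ t : Fin l.length → V, t ∈ S ↔ ∀ v, (List.ofFn t).count v = f v := by
    intro t
    simp only [hS, mem_filter, mem_univ, true_and]
    constructor
    · intro h v; rw [← count_card]; exact h v
    · intro h v; rw [count_card]; exact h v
  have ht₀ : t₀ ∈ S := (hmem t₀).mpr (by rw [hofn]; exact hcnt)
  -- counting permutations fiberwise over S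
  have hfib : (Finset.univ : Finset (Equiv.Perm (Fin l.length))).card
      = ∑ t ∈ S, (Finset.univ.filter (fun g : Equiv.Perm (Fin l.length) => t₀ ∘ g = t)).card := by
    apply Finset.card_eq_sum_card_fiberwise
    intro g _
    simp only [Finset.mem_coe]; rw [hmem]
    intro v
    rw [(g.ofFn_comp_perm t₀).count_eq, hofn]
    exact hcnt v
  have hfibcard : ∀ t ∈ S,
      (Finset.univ.filter (fun g : Equiv.Perm (Fin l.length) => t₀ ∘ g = t)).card
        = ∏ v, (f v).factorial := by
    intro t htS
    obtain ⟨σ, hσ⟩ : ∃ σ : Equiv.Perm (Fin l.length), t₀ ∘ σ = t := by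
      apply perm_exists
      rw [hofn, List.perm_iff_count]
      intro v
      rw [hcnt v, ← (hmem t).mp htS v]
    -- bijection with the stabilizer
    have hb : (Finset.univ.filter (fun g : Equiv.Perm (Fin l.length) => t₀ ∘ g = t)).card
        = (Finset.univ.filter (fun g : Equiv.Perm (Fin l.length) => t₀ ∘ g = t₀)).card := by
      apply Finset.card_bij (fun g _ => g * σ⁻¹)
      · intro g hg
        simp only [mem_filter, mem_univ, true_and] at hg ⊢
        ext s
        have h1 := congrFun hg (σ⁻¹ s)
        have h2 := congrFun hσ (σ⁻¹ s)
        simp only [Function.comp_apply] at h1 h2 ⊢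
        simp only [Equiv.Perm.mul_apply]
        rw [h1, ← h2]
        simp
      · intro g1 h1 g2 h2 h
        exact mul_right_cancel h
      · intro g hg
        simp only [mem_filter, mem_univ, true_and] at hg
        refine ⟨g * σ, by simp ; rw [show t₀ ∘ ⇑g ∘ ⇑σ = (t₀ ∘ ⇑g) ∘ ⇑σ from rfl, hg, hσ], by simp [mul_assoc]⟩
    rw [hb]
    have : (Finset.univ.filter (fun g : Equiv.Perm (Fin l.length) => t₀ ∘ g = t₀)).card
        = Fintype.card {g : Equiv.Perm (Fin l.length) // t₀ ∘ g = t₀} := by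
      rw [Fintype.card_subtype]
    rw [this, DomMulAct.stabilizer_card]
    apply Finset.prod_congr rfl
    intro v _
    congr 1
    rw [Fintype.card_subtype, count_card, hofn, hcnt v]
  rw [Finset.sum_congr rfl hfibcard, Finset.sum_const, smul_eq_mul] at hfib
  rw [← hfib, Finset.card_univ, Fintype.card_perm, Fintype.card_fin]

end Stmt15Aux

/-- For a hb-graph on `Fin n` with hb-edges of m-cardinalities `ρ_k` satisfying
`1 ≤ ρ_k ≤ r`, where `r ≥ 2` is the m-range, the total sum of all entries of the
silo e-adjacency hypermatrix equals `r · p`, so that the number `p` of hb-edges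
is retrievable from `A_sil`. -/
theorem stmt15 (n p r : ℕ) (hr : 2 ≤ r) (e : Fin p → Fin n → ℕ)
    (hlo : ∀ k, 1 ≤ ∑ j, e k j) (hub : ∀ k, ∑ j, e k j ≤ r)
    (hrange : Finset.univ.sup (fun k : Fin p => ∑ j, e k j) = r) :
    ∑ t : Fin r → Fin n ⊕ Fin (r - 1), Asil n p r e t = (r : ℝ) * p := by
  letI : LinearOrder (Fin n ⊕ Fin (r-1)) :=
    LinearOrder.lift' (fun v => ((Fintype.equivFin _ v : Fin _) : ℕ))
      (fun a b h => (Fintype.equivFin _).injective (Fin.val_injective h))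
  unfold Asil
  rw [Finset.sum_comm]
  have hterm : ∀ k : Fin p,
      (∑ t : Fin r → Fin n ⊕ Fin (r - 1),
        if ∀ v, (Finset.univ.filter (fun s => t s = v)).card = siloEdge n p r e k v
        then ((∏ v, (siloEdge n p r e k v).factorial : ℕ) : ℝ) / (r - 1).factorial
        else 0) = (r : ℝ) := by
    intro k
    set ρ := ∑ j, e k j with hρ
    have hsum : ∑ v, siloEdge n p r e k v = r := by
      rw [Fintype.sum_sum_type]
      have h1 : ∑ i : Fin n, siloEdge n p r e k (Sum.inl i) = ρ := rfl
      have h2 : ∑ s : Fin (r-1), siloEdge n p r e k (Sum.inr s) = r - ρ := by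
        show (∑ s : Fin (r-1), if (s : ℕ) + 1 = ρ then r - ρ else 0) = r - ρ
        by_cases h : ρ = r
        · simp [h]
        · have hlt : ρ < r := lt_of_le_of_ne (hub k) h
          have h1ρ : 1 ≤ ρ := hlo k
          rw [Fin.sum_univ_eq_sum_range (fun s => if s + 1 = ρ then r - ρ else 0) (r-1)]
          rw [Finset.sum_congr rfl (fun s hs => if_congr
            (show s + 1 = ρ ↔ s = ρ - 1 by omega) rfl rfl)]
          rw [Finset.sum_ite_eq' (Finset.range (r-1)) (ρ-1)]
          simp only [Finset.mem_range, if_pos (by omega : ρ - 1 < r - 1)]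
      have h3 : ρ ≤ r := hub k
      rw [h1, h2]
      omega
    have hkey := key (siloEdge n p r e k) hsum
    rw [← Finset.sum_filter, Finset.sum_const, nsmul_eq_mul]
    have hfac : ((r - 1).factorial : ℝ) ≠ 0 := Nat.cast_ne_zero.mpr (Nat.factorial_ne_zero _)
    rw [mul_div_assoc']
    rw [div_eq_iff hfac]
    rw [← Nat.cast_mul]
    rw [hkey]
    have h4 : r * (r-1).factorial = r.factorial := Nat.mul_factorial_pred (by omega)
    rw [← h4]
    push_cast
    ring
  rw [Finset.sum_congr rfl (fun k _ => hterm k), Finset.sum_const, Finset.card_univ,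
    Fintype.card_fin, nsmul_eq_mul, mul_comm]
end
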